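/- Choi–Jamiołkowski swap identity: Let H_{A'} be a copy of H_A, let T : L(H_A) → L(H_B) be a linear map with Choi–Jamiołkowski representation ω = (T⊗id)(Φ_{AA'}) (a matrix on H_A⊗H_B), and let P be any matrix on H_A⊗H_{A'}. Then Tr[ ((T⊗T)(P)) · F_B ] = d_A² · Tr[ ω_{AB} · ω_{A'B} · (I_B ⊗ Pᵀ) ], where on the left T⊗T maps L(H_A⊗H_{A'}) to L(H_B⊗H_{B'}) (H_{B'} a copy of H_B) and F_B is the swap operator on H_B⊗H_{B'}, while on the right the trace is over H_A⊗H_{A'}⊗H_B, ω_{AB} denotes ω acting on factors A,B tensored with I_{A'}, ω_{A'B} denotes ω acting on factors A',B tensored with I_A, and Pᵀ is the transpose of P acting on factors A,A'. -/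

import Mathlib

/-! In the product basis the Choi matrix has entries
`ω_{(i,β),(j,γ)} = d_A⁻¹ T(|i⟩⟨j|)_{βγ}`. Expanding both traces, each side becomes
`∑ P_{(i,k),(j,l)} T(|i⟩⟨j|)_{βγ} T(|k⟩⟨l|)_{γβ}`: on the left the swap contracts the two output
indices crosswise, on the right the shared `B` index of `ω_{AB} ω_{A'B}` does the same, and the two
factors `d_A⁻¹` are absorbed by `d_A²`. -/

open scoped Kronecker
open MeasureTheory Matrix
open scoped ComplexOrder

noncomputable section

namespace Decoupling

/-- We equip the unitary group with its Borel σ-algebra. -/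
instance (n : Type*) [Fintype n] [DecidableEq n] :
    MeasurableSpace (Matrix.unitaryGroup n ℂ) := borel _

instance (n : Type*) [Fintype n] [DecidableEq n] :
    BorelSpace (Matrix.unitaryGroup n ℂ) := ⟨rfl⟩

/-- The square root of a positive semidefinite matrix (the old `Matrix.PosSemidef.sqrt`). -/
def psdSqrt {n : Type*} [Fintype n] [DecidableEq n] {A : Matrix n n ℂ} (hA : A.PosSemidef) :
    Matrix n n ℂ :=
  (hA.1.eigenvectorUnitary : Matrix n n ℂ) * Matrix.diagonal ((↑) ∘ Real.sqrt ∘ hA.1.eigenvalues) *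
    (star hA.1.eigenvectorUnitary : Matrix n n ℂ)

/-- The trace norm (Schatten 1-norm) `‖X‖₁ = Tr √(XᴴX)` of a complex matrix. -/
def trNorm {n : Type*} [Fintype n] [DecidableEq n] (X : Matrix n n ℂ) : ℝ :=
  ((psdSqrt (Matrix.posSemidef_conjTranspose_mul_self X)).trace).re

/-- The Hilbert–Schmidt norm (Schatten 2-norm) `‖X‖₂ = √(Tr (XᴴX))`. -/
def hsNorm {n : Type*} [Fintype n] (X : Matrix n n ℂ) : ℝ :=
  Real.sqrt ((Xᴴ * X).trace.re)

/-- Partial trace over the first tensor factor. -/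
def ptrFst {a r : Type*} [Fintype a] (ρ : Matrix (a × r) (a × r) ℂ) : Matrix r r ℂ :=
  Matrix.of fun i j => ∑ k, ρ (k, i) (k, j)

/-- Partial trace over the second tensor factor. -/
def ptrSnd {a r : Type*} [Fintype r] (ρ : Matrix (a × r) (a × r) ℂ) : Matrix a a ℂ :=
  Matrix.of fun i j => ∑ k, ρ (i, k) (j, k)

/-- The maximally entangled state `Φ_{AA'}` on `H_A ⊗ H_{A'}`. -/
def maxEnt (a : Type*) [Fintype a] [DecidableEq a] : Matrix (a × a) (a × a) ℂ :=
  Matrix.of fun p q => if p.1 = p.2 ∧ q.1 = q.2 then (Fintype.card a : ℂ)⁻¹ else 0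

/-- The tensor product `T ⊗ E` of two superoperators (given on basis matrices, which
for linear `T`, `E` agrees with the usual tensor product of linear maps). -/
def tensorHom {a a' b r : Type*} [Fintype a] [Fintype a'] [DecidableEq a] [DecidableEq a']
    (T : Matrix a a ℂ → Matrix b b ℂ) (E : Matrix a' a' ℂ → Matrix r r ℂ)
    (M : Matrix (a × a') (a × a') ℂ) : Matrix (b × r) (b × r) ℂ :=
  Matrix.of fun p q => ∑ i, ∑ j, ∑ k, ∑ l,
    M (i, k) (j, l) * T (Matrix.single i j 1) p.1 q.1
      * E (Matrix.single k l 1) p.2 q.2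

/-- The Choi–Jamiołkowski representation `ω = (T ⊗ id)(Φ_{AA'})`, with the output (`B`)
factor first and the copy `A'` second. -/
def choi {a b : Type*} [Fintype a] [DecidableEq a]
    (T : Matrix a a ℂ → Matrix b b ℂ) : Matrix (b × a) (b × a) ℂ :=
  tensorHom T id (maxEnt a)

/-- Reindexing that exchanges the two tensor factors. -/
def swapIdx {a b : Type*} (M : Matrix (a × b) (a × b) ℂ) : Matrix (b × a) (b × a) ℂ :=
  M.submatrix Prod.swap Prod.swap

/-- The conditional min-entropy `Hmin(A|B)_ρ` of a bipartite operator (conditioning on the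
second tensor factor). -/
def Hmin {a b : Type*} [Fintype a] [DecidableEq a] [Fintype b]
    (ρ : Matrix (a × b) (a × b) ℂ) : ℝ :=
  sSup {x : ℝ | ∃ σ : Matrix b b ℂ, σ.PosSemidef ∧ σ.trace = 1 ∧
    ((2 : ℝ) ^ (-x) • ((1 : Matrix a a ℂ) ⊗ₖ σ) - ρ).PosSemidef}

/-- A subnormalized density operator. -/
def IsSubDensity {n : Type*} [Fintype n] (ρ : Matrix n n ℂ) : Prop :=
  ρ.PosSemidef ∧ ρ.trace.re ≤ 1

/-- Conjugation `(U ⊗ 1_R) ρ (U ⊗ 1_R)ᴴ` on the first factor. -/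
def conjA {a r : Type*} [Fintype a] [Fintype r] [DecidableEq r]
    (U : Matrix a a ℂ) (ρ : Matrix (a × r) (a × r) ℂ) : Matrix (a × r) (a × r) ℂ :=
  (U ⊗ₖ (1 : Matrix r r ℂ)) * ρ * (U ⊗ₖ (1 : Matrix r r ℂ))ᴴ

/-- Two-fold conjugation `U^{⊗2} M (U^{⊗2})ᴴ`. -/
def conj2 {a : Type*} [Fintype a] (U : Matrix a a ℂ) (M : Matrix (a × a) (a × a) ℂ) :
    Matrix (a × a) (a × a) ℂ :=
  (U ⊗ₖ U) * M * (U ⊗ₖ U)ᴴ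

/-- The Haar two-fold twirl `G_H(M) = ∫ U^{⊗2} M (U†)^{⊗2} dU` (entrywise integral). -/
def twirlHaar {a : Type*} [Fintype a] [DecidableEq a]
    (μ : Measure (Matrix.unitaryGroup a ℂ)) (M : Matrix (a × a) (a × a) ℂ) :
    Matrix (a × a) (a × a) ℂ :=
  Matrix.of fun p q => ∫ U : Matrix.unitaryGroup a ℂ, conj2 (U : Matrix a a ℂ) M p q ∂μ

/-- The two-fold twirl `G_W(M) = ∑ i, p i • U_i^{⊗2} M (U_i†)^{⊗2}` of a finite family. -/
def twirlMix {ι a : Type*} [Fintype ι] [Fintype a] [DecidableEq a]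
    (p : ι → ℝ) (V : ι → Matrix.unitaryGroup a ℂ) (M : Matrix (a × a) (a × a) ℂ) :
    Matrix (a × a) (a × a) ℂ :=
  ∑ i, p i • conj2 (V i : Matrix a a ℂ) M

/-- `‖S‖⋄ ≤ δ`: the trace norm of `(S ⊗ id_R)(X)` is at most `δ ‖X‖₁` for every ancilla `R`
and every `X`. -/
def DiamondLE {c : Type*} [Fintype c] [DecidableEq c]
    (S : Matrix c c ℂ → Matrix c c ℂ) (δ : ℝ) : Prop :=
  ∀ (m : ℕ) (X : Matrix (c × Fin m) (c × Fin m) ℂ),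
    trNorm (tensorHom S id X) ≤ δ * trNorm X

/-- `{(p i, V i)}` is a `δ`-approximate unitary two-design (w.r.t. the Haar probability
measure `μ`). -/
def IsApproxTwoDesign {ι a : Type*} [Fintype ι] [Fintype a] [DecidableEq a]
    (μ : Measure (Matrix.unitaryGroup a ℂ))
    (p : ι → ℝ) (V : ι → Matrix.unitaryGroup a ℂ) (δ : ℝ) : Prop :=
  (∀ i, 0 ≤ p i) ∧ (∑ i, p i = 1) ∧
    DiamondLE (fun M => twirlMix p V M - twirlHaar μ M) δ

end Decoupling

namespace Decoupling

/-- The swap operator `F = ∑_{i,j} |i⟩⟨j| ⊗ |j⟩⟨i|` on `H ⊗ H`. -/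
def swapOp (b : Type*) [DecidableEq b] : Matrix (b × b) (b × b) ℂ :=
  Matrix.of fun p q => if p.1 = q.2 ∧ p.2 = q.1 then 1 else 0

/-- Embed an operator on `H_A ⊗ H_B` into `H_A ⊗ H_{A'} ⊗ H_B` (identity on `A'`). -/
def embAB {a b : Type*} [DecidableEq a] (ω : Matrix (a × b) (a × b) ℂ) :
    Matrix (a × a × b) (a × a × b) ℂ :=
  Matrix.of fun p q => (if p.2.1 = q.2.1 then 1 else 0) * ω (p.1, p.2.2) (q.1, q.2.2)

/-- Embed an operator on `H_{A'} ⊗ H_B` into `H_A ⊗ H_{A'} ⊗ H_B` (identity on `A`). -/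
def embA'B {a b : Type*} [DecidableEq a] (ω : Matrix (a × b) (a × b) ℂ) :
    Matrix (a × a × b) (a × a × b) ℂ :=
  Matrix.of fun p q => (if p.1 = q.1 then 1 else 0) * ω (p.2.1, p.2.2) (q.2.1, q.2.2)

/-- Embed an operator on `H_A ⊗ H_{A'}` into `H_A ⊗ H_{A'} ⊗ H_B` (identity on `B`, so that
`I_B ⊗ Pᵀ` reordered as `A, A', B`). -/
def embAA' {a b : Type*} [DecidableEq b] (ρ : Matrix (a × a) (a × a) ℂ) :
    Matrix (a × a × b) (a × a × b) ℂ :=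
  Matrix.of fun p q => (if p.2.2 = q.2.2 then 1 else 0) * ρ (p.1, p.2.1) (q.1, q.2.1)

lemma card_mul_swapIdx_choi_apply {a b : Type*} [Fintype a] [DecidableEq a]
    (T : Matrix a a ℂ → Matrix b b ℂ) (i j : a) (β γ : b) :
    (Fintype.card a : ℂ) * swapIdx (choi T) (i, β) (j, γ) = T (single i j 1) β γ := by
  have : Nonempty a := ⟨i⟩
  have hcard : (Fintype.card a : ℂ) ≠ 0 := Nat.cast_ne_zero.mpr Fintype.card_ne_zero
  simp [swapIdx, choi, tensorHom, maxEnt, single, ite_and, hcard]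

lemma trace_mul_swapOp {b : Type*} [Fintype b] [DecidableEq b] (M : Matrix (b × b) (b × b) ℂ) :
    (M * swapOp b).trace = ∑ β, ∑ γ, M (β, γ) (γ, β) := by
  simp [trace, mul_apply, swapOp, Fintype.sum_prod_type, ite_and]

lemma embAB_mul_embA'B_apply {a b : Type*} [Fintype a] [DecidableEq a] [Fintype b]
    (ω ω' : Matrix (a × b) (a × b) ℂ) (i j k l : a) (β γ : b) :
    (embAB ω * embA'B ω') (i, k, β) (j, l, γ) = ∑ δ, ω (i, β) (j, δ) * ω' (k, δ) (l, γ) := by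
  simp [mul_apply, embAB, embA'B, Fintype.sum_prod_type]

lemma trace_mul_embAA' {a b : Type*} [Fintype a] [Fintype b] [DecidableEq b]
    (N : Matrix (a × a × b) (a × a × b) ℂ) (Q : Matrix (a × a) (a × a) ℂ) :
    (N * embAA' Q).trace = ∑ i, ∑ k, ∑ β, ∑ j, ∑ l, N (i, k, β) (j, l, β) * Q (j, l) (i, k) := by
  simp [trace, mul_apply, embAA', Fintype.sum_prod_type]

/-- **Choi–Jamiołkowski swap identity**:
`Tr[(T ⊗ T)(P) F_B] = d_A² Tr[ω_{AB} ω_{A'B} (I_B ⊗ Pᵀ)]`. -/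
theorem choi_swap_identity {a b : Type*} [Fintype a] [DecidableEq a]
    [Fintype b] [DecidableEq b]
    (T : Matrix a a ℂ →ₗ[ℂ] Matrix b b ℂ) (P : Matrix (a × a) (a × a) ℂ) :
    ((tensorHom (⇑T) (⇑T) P) * swapOp b).trace =
      (Fintype.card a : ℂ) ^ 2 *
        (embAB (swapIdx (choi ⇑T)) * embA'B (swapIdx (choi ⇑T)) *
          embAA' (b := b) Pᵀ).trace := by
  rw [trace_mul_swapOp, trace_mul_embAA']
  simp only [tensorHom, of_apply, embAB_mul_embA'B_apply, transpose_apply,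
    ← card_mul_swapIdx_choi_apply, Finset.mul_sum, Finset.sum_mul, ← Fintype.sum_prod_type']
  let reindex : b × b × a × a × a × a ≃ a × a × b × a × a × b :=
    { toFun := fun ⟨β, γ, i, j, k, l⟩ => (i, k, β, j, l, γ)
      invFun := fun ⟨i, k, β, j, l, γ⟩ => (β, γ, i, j, k, l)
      left_inv := fun _ => rfl
      right_inv := fun _ => rfl }
  exact Fintype.sum_equiv reindex _ _ fun ⟨_, _, _, _, _, _⟩ => by
    simp only [reindex, Equiv.coe_fn_mk]
    ring

end Decoupling
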